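/- arXiv:1706.01393 — 4 statements merged into one kernel-verified Lean document; each statement's English description precedes it below -/
import Mathlib

section
/- For all vectors a, w in d-dimensional Euclidean space ℝ^d, one has ‖a+w‖²/(1+‖a+w‖²) − ‖a‖²/(1+‖a‖²) − 2⟨a,w⟩/(1+‖a‖²)² ≤ ‖w‖²/(1+‖a‖²)². -/
/- `x ↦ x / (1 + x)` is concave on `(-1, ∞)`, so it lies below its tangent at `‖a‖²`; evaluating at
`‖a + w‖² = ‖a‖² + 2⟨a, w⟩ + ‖w‖²` leaves exactly the term `‖w‖² / (1 + ‖a‖²)²`. -/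

theorem div_one_add_le_tangent {a x : ℝ} (ha : -1 < a) (hx : -1 < x) :
    x / (1 + x) ≤ a / (1 + a) + (x - a) / (1 + a) ^ 2 := by
  have ha' : 0 < 1 + a := by linarith
  have hx' : 0 < 1 + x := by linarith
  have gap : a / (1 + a) + (x - a) / (1 + a) ^ 2 - x / (1 + x)
      = (x - a) ^ 2 / ((1 + a) ^ 2 * (1 + x)) := by
    field_simp
    ring
  have : 0 ≤ (x - a) ^ 2 / ((1 + a) ^ 2 * (1 + x)) := by positivity
  linarith

/-- Jump estimate for `H(r) = r²/(1+r²)`: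
`H(‖a+w‖) − H(‖a‖) − 2⟨a,w⟩/(1+‖a‖²)² ≤ ‖w‖²/(1+‖a‖²)²`. -/
theorem H_jump_estimate
    (d : ℕ) (a w : EuclideanSpace ℝ (Fin d)) :
    ‖a + w‖ ^ 2 / (1 + ‖a + w‖ ^ 2) - ‖a‖ ^ 2 / (1 + ‖a‖ ^ 2)
        - 2 * (inner ℝ a w : ℝ) / (1 + ‖a‖ ^ 2) ^ 2
      ≤ ‖w‖ ^ 2 / (1 + ‖a‖ ^ 2) ^ 2 := by
  have tangent := div_one_add_le_tangent (a := ‖a‖ ^ 2) (x := ‖a + w‖ ^ 2)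
    (by linarith [sq_nonneg ‖a‖]) (by linarith [sq_nonneg ‖a + w‖])
  have split : 2 * (inner ℝ a w : ℝ) / (1 + ‖a‖ ^ 2) ^ 2
      = (‖a + w‖ ^ 2 - ‖a‖ ^ 2) / (1 + ‖a‖ ^ 2) ^ 2 - ‖w‖ ^ 2 / (1 + ‖a‖ ^ 2) ^ 2 := by
    rw [norm_add_sq_real, ← sub_div]
    ring
  linarith
end

section
/- Let δ > 0 and let x, y be vectors in d-dimensional Euclidean space ℝ^d with x ≠ 0 and ‖x+y‖ ≥ δ‖x‖. Then 1/‖x+y‖² − 1/‖x‖² + 2⟨x,y⟩/‖x‖⁴ ≤ K · max(‖y‖², |⟨x,y⟩|)/‖x‖⁴, where K := 2·max(1, 1/δ²). -/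
/-!
Write `a = ‖x‖²`, `b = ‖x + y‖²`, so that `b - a = 2⟨x,y⟩ + ‖y‖²`. The second-order Taylor
remainder of `t ↦ 1/t` is exact: `1/b - 1/a + (b - a)/a² = (b - a)²/(b a²)`, so the left-hand side
equals `((b - a)²/b - ‖y‖²)/a²`. If `b ≥ a` then `(b - a)²/b ≤ b - a ≤ 2|⟨x,y⟩| + ‖y‖²`; if `b < a`
then `(b - a)²/b ≤ (a - b) a/b ≤ (a - b)/δ² ≤ 2|⟨x,y⟩|/δ²`, using `b ≥ δ² a`.
-/

theorem inv_sub_inv_add_sub_div_sq {a b : ℝ} (ha : a ≠ 0) (hb : b ≠ 0) :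
    b⁻¹ - a⁻¹ + (b - a) / a ^ 2 = (b - a) ^ 2 / b / a ^ 2 := by
  field_simp
  ring

theorem sq_sub_div_le_max {a b c : ℝ} (ha : 0 ≤ a) (hb : 0 < b) (hab : a ≤ c * b) :
    (b - a) ^ 2 / b ≤ max (b - a) (c * (a - b)) := by
  rw [div_le_iff₀ hb]
  rcases le_total a b with hle | hlt
  · calc (b - a) ^ 2 = (b - a) * (b - a) := sq _
      _ ≤ (b - a) * b := by gcongr; linarith
      _ ≤ max (b - a) (c * (a - b)) * b := by gcongr; exact le_max_left _ _
  · calc (b - a) ^ 2 = (a - b) * (a - b) := by ring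
      _ ≤ (a - b) * (c * b) := by gcongr; linarith
      _ = c * (a - b) * b := by ring
      _ ≤ max (b - a) (c * (a - b)) * b := by gcongr; exact le_max_right _ _

theorem one_div_sub_one_div_add_two_mul_div_sq_le {a b c s n : ℝ} (ha : 0 < a) (hb : 0 < b)
    (hn : 0 ≤ n) (hbs : b = a + 2 * s + n) (hab : a ≤ c * b) :
    1 / b - 1 / a + 2 * s / a ^ 2 ≤ 2 * max 1 c * max n |s| / a ^ 2 := by
  have hc : 0 ≤ c := nonneg_of_mul_nonneg_left (ha.le.trans hab) hb
  have hs : |s| ≤ max n |s| := le_max_right _ _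
  have hmax : max (b - a) (c * (a - b)) ≤ 2 * max 1 c * max n |s| + n := by
    have h1 : 1 ≤ max 1 c := le_max_left _ _
    have h2 : c ≤ max 1 c := le_max_right _ _
    have hM : 0 ≤ max n |s| := (abs_nonneg s).trans hs
    refine max_le ?_ ?_
    · nlinarith [neg_abs_le s, le_abs_self s]
    · nlinarith [neg_abs_le s, mul_nonneg hc hn, mul_le_mul_of_nonneg_left hs hc]
  calc 1 / b - 1 / a + 2 * s / a ^ 2 = (b⁻¹ - a⁻¹ + (b - a) / a ^ 2) - n / a ^ 2 := by
        rw [hbs]; ring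
    _ = (b - a) ^ 2 / b / a ^ 2 - n / a ^ 2 := by
        rw [inv_sub_inv_add_sub_div_sq ha.ne' hb.ne']
    _ ≤ (2 * max 1 c * max n |s| + n) / a ^ 2 - n / a ^ 2 := by
        gcongr
        exact (sq_sub_div_le_max ha.le hb hab).trans hmax
    _ = 2 * max 1 c * max n |s| / a ^ 2 := by ring

/-- Combined second-order Taylor estimate for `V(r) = r⁻²` (eq-|x|-2-estimate):
if `x ≠ 0` and `‖x+y‖ ≥ δ‖x‖` with `δ > 0`, then
`1/‖x+y‖² − 1/‖x‖² + 2⟨x,y⟩/‖x‖⁴ ≤ K·max(‖y‖², |⟨x,y⟩|)/‖x‖⁴` with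
`K = 2·max(1, 1/δ²)`. -/
theorem V_taylor_estimate
    (d : ℕ) (δ : ℝ) (hδ : 0 < δ) (x y : EuclideanSpace ℝ (Fin d))
    (hx : x ≠ 0) (hlow : δ * ‖x‖ ≤ ‖x + y‖) :
    1 / ‖x + y‖ ^ 2 - 1 / ‖x‖ ^ 2 + 2 * (inner ℝ x y : ℝ) / ‖x‖ ^ 4
      ≤ (2 * max 1 (1 / δ ^ 2)) * max (‖y‖ ^ 2) |(inner ℝ x y : ℝ)| / ‖x‖ ^ 4 := by
  have hx0 : 0 < ‖x‖ := norm_pos_iff.mpr hx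
  have hxy0 : 0 < ‖x + y‖ := (by positivity : 0 < δ * ‖x‖).trans_le hlow
  have hab : ‖x‖ ^ 2 ≤ 1 / δ ^ 2 * ‖x + y‖ ^ 2 := by
    rw [one_div_mul_eq_div, le_div_iff₀ (by positivity), ← mul_pow, mul_comm]
    gcongr
  have h := one_div_sub_one_div_add_two_mul_div_sq_le (by positivity) (by positivity)
    (by positivity) (norm_add_sq_real x y) hab
  rwa [← pow_mul] at h
end

section
/- Let a, w be vectors in d-dimensional Euclidean space ℝ^d with a ≠ 0. Then ‖a+w‖/(1+‖a+w‖) − ‖a‖/(1+‖a‖) − ⟨a,w⟩/(‖a‖(1+‖a‖)²) ≤ 2‖w‖/(1+‖a‖)². -/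
open scoped RealInnerProductSpace

/- `F r = r / (1 + r)` is concave on `(-1, ∞)` with `F' r = 1 / (1 + r) ^ 2`; the error in its
tangent-line bound at `‖a‖` absorbs one `‖w‖ / (1 + ‖a‖) ^ 2`, and the Cauchy–Schwarz bound on the
linear term the other. -/

theorem div_one_add_sub_div_one_add_le {r s : ℝ} (hr : -1 < r) (hs : -1 < s) :
    r / (1 + r) - s / (1 + s) ≤ (r - s) / (1 + s) ^ 2 := by
  have hr' : 0 < 1 + r := by linarith
  have hs' : 0 < 1 + s := by linarith
  have gap : (r - s) / (1 + s) ^ 2 - (r / (1 + r) - s / (1 + s))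
      = (r - s) ^ 2 / ((1 + r) * (1 + s) ^ 2) := by
    field_simp
    ring
  have : 0 ≤ (r - s) ^ 2 / ((1 + r) * (1 + s) ^ 2) := by positivity
  linarith

theorem norm_add_div_one_add_sub_le {E : Type*} [SeminormedAddCommGroup E] (a w : E) :
    ‖a + w‖ / (1 + ‖a + w‖) - ‖a‖ / (1 + ‖a‖) ≤ ‖w‖ / (1 + ‖a‖) ^ 2 := by
  have hlip : ‖a + w‖ - ‖a‖ ≤ ‖w‖ := by
    simpa using norm_sub_norm_le (a + w) a
  calc _ ≤ (‖a + w‖ - ‖a‖) / (1 + ‖a‖) ^ 2 :=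
        div_one_add_sub_div_one_add_le (by linarith [norm_nonneg (a + w)])
          (by linarith [norm_nonneg a])
    _ ≤ ‖w‖ / (1 + ‖a‖) ^ 2 := by gcongr

theorem neg_inner_div_norm_le_norm {E : Type*} [NormedAddCommGroup E] [InnerProductSpace ℝ E]
    (a w : E) : -⟪a, w⟫ / ‖a‖ ≤ ‖w‖ := by
  rcases eq_or_ne a 0 with rfl | ha
  · simp
  rw [div_le_iff₀ (norm_pos_iff.mpr ha), ← inner_neg_left, mul_comm, ← norm_neg a]
  exact real_inner_le_norm (-a) w

theorem F_jump_first_order_general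
    (d : ℕ) (a w : EuclideanSpace ℝ (Fin d)) :
    ‖a + w‖ / (1 + ‖a + w‖) - ‖a‖ / (1 + ‖a‖)
        - (inner ℝ a w : ℝ) / (‖a‖ * (1 + ‖a‖) ^ 2)
      ≤ 2 * ‖w‖ / (1 + ‖a‖) ^ 2 := by
  calc _ = (‖a + w‖ / (1 + ‖a + w‖) - ‖a‖ / (1 + ‖a‖))
          + -⟪a, w⟫ / ‖a‖ / (1 + ‖a‖) ^ 2 := by
        rw [div_div]
        ring
    _ ≤ ‖w‖ / (1 + ‖a‖) ^ 2 + ‖w‖ / (1 + ‖a‖) ^ 2 := by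
        gcongr
        · exact norm_add_div_one_add_sub_le a w
        · exact neg_inner_div_norm_le_norm a w
    _ = 2 * ‖w‖ / (1 + ‖a‖) ^ 2 := by ring

/-- First-order jump estimate for `F(r) = r/(1+r)` (eq2-F estimate):
for `a ≠ 0`,
`F(‖a+w‖) − F(‖a‖) − ⟨a,w⟩/(‖a‖(1+‖a‖)²) ≤ 2‖w‖/(1+‖a‖)²`. -/
theorem F_jump_first_order
    (d : ℕ) (a w : EuclideanSpace ℝ (Fin d)) (ha : a ≠ 0) :
    ‖a + w‖ / (1 + ‖a + w‖) - ‖a‖ / (1 + ‖a‖)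
        - (inner ℝ a w : ℝ) / (‖a‖ * (1 + ‖a‖) ^ 2)
      ≤ 2 * ‖w‖ / (1 + ‖a‖) ^ 2 :=
  F_jump_first_order_general d a w
end

section
/- Let a, w be vectors in d-dimensional Euclidean space ℝ^d with a ≠ 0. Then ‖a+w‖/(1+‖a+w‖) − ‖a‖/(1+‖a‖) − ⟨a,w⟩/(‖a‖(1+‖a‖)²) ≤ ‖w‖²/(2‖a‖(1+‖a‖)²). -/
/-! `F(r) = r/(1+r)` is concave, so `F(‖a+w‖) - F(‖a‖)` is at most `(‖a+w‖ - ‖a‖)/(1+‖a‖)²`.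
Expanding `‖a+w‖² = ‖a‖² + 2⟪a,w⟫ + ‖w‖²` and using `2r(s - r) ≤ s² - r²` gives
`‖a+w‖ - ‖a‖ ≤ (⟪a,w⟫ + ‖w‖²/2)/‖a‖`. -/

open RealInnerProductSpace

theorem div_one_add_le_tangent_s15 {r s : ℝ} (hr : -1 < r) (hs : -1 < s) :
    s / (1 + s) ≤ r / (1 + r) + (s - r) / (1 + r) ^ 2 := by
  have hr' : 0 < 1 + r := by linarith
  have hs' : 0 < 1 + s := by linarith
  have gap : r / (1 + r) + (s - r) / (1 + r) ^ 2 - s / (1 + s)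
      = (s - r) ^ 2 / ((1 + s) * (1 + r) ^ 2) := by
    field_simp
    ring
  have : 0 ≤ (s - r) ^ 2 / ((1 + s) * (1 + r) ^ 2) := by positivity
  linarith

theorem norm_add_sub_norm_le {E : Type*} [NormedAddCommGroup E] [InnerProductSpace ℝ E]
    {a : E} (ha : a ≠ 0) (w : E) :
    ‖a + w‖ - ‖a‖ ≤ (⟪a, w⟫ + ‖w‖ ^ 2 / 2) / ‖a‖ := by
  have hr : 0 < ‖a‖ := norm_pos_iff.mpr ha
  rw [le_div_iff₀ hr]
  have expand : ‖a + w‖ ^ 2 = ‖a‖ ^ 2 + 2 * ⟪a, w⟫ + ‖w‖ ^ 2 := by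
    simpa only [sq] using norm_add_sq_real a w
  nlinarith [sq_nonneg (‖a + w‖ - ‖a‖)]

/-- Second-order jump estimate for `F(r) = r/(1+r)` (eq1-F estimate):
for `a ≠ 0`,
`F(‖a+w‖) − F(‖a‖) − ⟨a,w⟩/(‖a‖(1+‖a‖)²) ≤ ‖w‖²/(2‖a‖(1+‖a‖)²)`. -/
theorem F_jump_second_order
    (d : ℕ) (a w : EuclideanSpace ℝ (Fin d)) (ha : a ≠ 0) :
    ‖a + w‖ / (1 + ‖a + w‖) - ‖a‖ / (1 + ‖a‖)
        - (inner ℝ a w : ℝ) / (‖a‖ * (1 + ‖a‖) ^ 2)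
      ≤ ‖w‖ ^ 2 / (2 * ‖a‖ * (1 + ‖a‖) ^ 2) := by
  have hr : 0 < ‖a‖ := norm_pos_iff.mpr ha
  have concave := div_one_add_le_tangent_s15 (r := ‖a‖) (s := ‖a + w‖)
    (by linarith) (by linarith [norm_nonneg (a + w)])
  have increment : (‖a + w‖ - ‖a‖) / (1 + ‖a‖) ^ 2
      ≤ (⟪a, w⟫ + ‖w‖ ^ 2 / 2) / ‖a‖ / (1 + ‖a‖) ^ 2 :=
    div_le_div_of_nonneg_right (norm_add_sub_norm_le ha w) (by positivity)
  have split : (⟪a, w⟫ + ‖w‖ ^ 2 / 2) / ‖a‖ / (1 + ‖a‖) ^ 2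
      = ⟪a, w⟫ / (‖a‖ * (1 + ‖a‖) ^ 2) + ‖w‖ ^ 2 / (2 * ‖a‖ * (1 + ‖a‖) ^ 2) := by
    field_simp
  linarith
end
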